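/- Let V ∈ span(e₁, …, e_{2n}) be a unit vector of the oscillator algebra 𝔤ₙ(λ), and let u = α ξ + β ζ for real numbers α, β. Then A_V u = (1/2)(α I − 2β E_λ) φV, (∇_u A_V)u = (1/4)(α I − 2β E_λ)² V, and R(V, A_V u) u = 0, where I denotes the identity map. -/

import Mathlib

open scoped RealInnerProductSpace
open Finset

noncomputable section

/-- The underlying inner product space of the oscillator algebra `𝔤ₙ(λ)`:
a `(2n+2)`-dimensional real inner product space. -/
abbrev Osc (n : ℕ) := EuclideanSpace ℝ (Fin (2*n+2))

/-- The basis vectors `e₁, …, eₙ`. -/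
def oe (n : ℕ) (i : Fin n) : Osc n :=
  EuclideanSpace.single ⟨i.1, by have := i.2; omega⟩ 1

/-- The basis vectors `e_{n+1}, …, e_{2n}`. -/
def oE (n : ℕ) (i : Fin n) : Osc n :=
  EuclideanSpace.single ⟨n + i.1, by have := i.2; omega⟩ 1

/-- The basis vector `ξ`. -/
def oXi (n : ℕ) : Osc n := EuclideanSpace.single ⟨2*n, by omega⟩ 1

/-- The basis vector `ζ`. -/
def oZeta (n : ℕ) : Osc n := EuclideanSpace.single ⟨2*n+1, by omega⟩ 1

/-- `br` is the Lie bracket of the oscillator algebra `𝔤ₙ(λ)`: the bilinear map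
determined by `[eᵢ, e_{n+j}] = δᵢⱼ ξ`, `[ζ, eⱼ] = λⱼ e_{n+j}`, `[ζ, e_{n+j}] = −λⱼ eⱼ`,
all other brackets of basis vectors being zero. -/
structure IsOscBracket (n : ℕ) (lam : Fin n → ℝ)
    (br : Osc n →ₗ[ℝ] Osc n →ₗ[ℝ] Osc n) : Prop where
  anti : ∀ X Y : Osc n, br X Y = - br Y X
  ee : ∀ i j : Fin n, br (oe n i) (oe n j) = 0
  eE : ∀ i j : Fin n, br (oe n i) (oE n j) = if i = j then oXi n else 0
  EE : ∀ i j : Fin n, br (oE n i) (oE n j) = 0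
  exi : ∀ i : Fin n, br (oe n i) (oXi n) = 0
  Exi : ∀ i : Fin n, br (oE n i) (oXi n) = 0
  zee : ∀ j : Fin n, br (oZeta n) (oe n j) = lam j • oE n j
  zeE : ∀ j : Fin n, br (oZeta n) (oE n j) = - (lam j • oe n j)
  xize : br (oXi n) (oZeta n) = 0

/-- `nab` is the Levi-Civita connection of the left-invariant metric (evaluated on
left-invariant fields): the bilinear map determined by the Koszul formula
`2 g(∇_X Y, Z) = g([X,Y], Z) − g([Y,Z], X) + g([Z,X], Y)`. -/
def IsLeviCivita (n : ℕ) (br nab : Osc n →ₗ[ℝ] Osc n →ₗ[ℝ] Osc n) : Prop :=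
  ∀ X Y Z : Osc n,
    2 * ⟪nab X Y, Z⟫ = ⟪br X Y, Z⟫ - ⟪br Y Z, X⟫ + ⟪br Z X, Y⟫

/-- The Nomizu operator `A_V X = −∇_X V`. -/
def nomizu {n : ℕ} (nab : Osc n →ₗ[ℝ] Osc n →ₗ[ℝ] Osc n) (V X : Osc n) : Osc n :=
  -(nab X V)

/-- The covariant derivative of the Nomizu operator:
`(∇_X A_V) Y = ∇_X (A_V Y) − A_V (∇_X Y)`. -/
def covNomizu {n : ℕ} (nab : Osc n →ₗ[ℝ] Osc n →ₗ[ℝ] Osc n) (V X Y : Osc n) : Osc n :=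
  nab X (nomizu nab V Y) - nomizu nab V (nab X Y)

/-- The curvature tensor `R(X,Y)Z = ∇_X ∇_Y Z − ∇_Y ∇_X Z − ∇_{[X,Y]} Z`. -/
def curvR {n : ℕ} (br nab : Osc n →ₗ[ℝ] Osc n →ₗ[ℝ] Osc n) (X Y Z : Osc n) : Osc n :=
  nab X (nab Y Z) - nab Y (nab X Z) - nab (br X Y) Z

/-- A unit vector `V ∈ 𝔤ₙ(λ)` is a *minimal* unit vector field if there is an orthonormal
basis `u₁, …, u_{2n+2}` of eigenvectors of `A_Vᵀ A_V` (the eigenvector condition being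
expressed as `g(A_V W, A_V uᵢ) = σᵢ² g(W, uᵢ)` for all `W`) with eigenvalues `σᵢ²` such that
`Σᵢ ((∇_{uᵢ} A_V)uᵢ + A_V R(V, A_V uᵢ)uᵢ)/(1 + σᵢ²) = (Σᵢ σᵢ²/(1 + σᵢ²)) V`. -/
def IsMinimal {n : ℕ} (br nab : Osc n →ₗ[ℝ] Osc n →ₗ[ℝ] Osc n) (V : Osc n) : Prop :=
  ∃ (u : Fin (2*n+2) → Osc n) (σ : Fin (2*n+2) → ℝ),
    (∀ i j, ⟪u i, u j⟫ = if i = j then 1 else 0) ∧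
    (∀ i, ∀ W : Osc n,
      ⟪nomizu nab V W, nomizu nab V (u i)⟫ = (σ i)^2 * ⟪W, u i⟫) ∧
    (∑ i, (1 + (σ i)^2)⁻¹ •
        (covNomizu nab V (u i) (u i) +
          nomizu nab V (curvR br nab V (nomizu nab V (u i)) (u i))))
      = (∑ i, (σ i)^2 / (1 + (σ i)^2)) • V

/-- The operator `φ` with `φ eᵢ = e_{n+i}`, `φ e_{n+i} = −eᵢ`, `φ ξ = φ ζ = 0`. -/
structure IsPhi (n : ℕ) (phi : Osc n →ₗ[ℝ] Osc n) : Prop where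
  he : ∀ i : Fin n, phi (oe n i) = oE n i
  hE : ∀ i : Fin n, phi (oE n i) = - oe n i
  hxi : phi (oXi n) = 0
  hzeta : phi (oZeta n) = 0

/-- The operator `E_λ` with `E_λ eᵢ = λᵢ eᵢ`, `E_λ e_{n+i} = λᵢ e_{n+i}`, `E_λ ξ = E_λ ζ = 0`. -/
structure IsElam (n : ℕ) (lam : Fin n → ℝ) (El : Osc n →ₗ[ℝ] Osc n) : Prop where
  he : ∀ i : Fin n, El (oe n i) = lam i • oe n i
  hE : ∀ i : Fin n, El (oE n i) = lam i • oE n i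
  hxi : El (oXi n) = 0
  hzeta : El (oZeta n) = 0
/-!
Both `φ` and `φE_λ` are skew-adjoint (`E_λ` is self-adjoint and commutes with `φ`), so the Koszul
formula collapses to
`∇_X Y = ½ g(φX,Y) ξ − ½ g(X,ξ) φY − ½ g(Y,ξ) φX + g(X,ζ) φE_λY`.
For `u = αξ + βζ` this gives `∇_u Y = −½ (αI − 2βE_λ) φY` and `∇_X u = −(α/2) φX`. In particular
`A_V u = ½ (αI − 2βE_λ) φV` and `∇_u u = 0`, so `(∇_u A_V)u = −∇_u ∇_u V = ¼ (αI − 2βE_λ)² V`,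
using that `φ` commutes with `E_λ` and `φ² V = −V` on `span(e₁, …, e_{2n})`.
Finally `V = φ(−φV)` and `A_V u` both lie in the image of `φ`, on which `∇` and the bracket only
produce multiples of `ξ`; these are killed by `φ` and cancel pairwise, so `R(φX, φY) u = 0` for all
`X`, `Y`.
-/

namespace Osc

variable {n : ℕ}

def indexEquiv (n : ℕ) : Fin n ⊕ Fin n ⊕ Fin 2 ≃ Fin (2 * n + 2) :=
  ((Equiv.sumCongr (Equiv.refl _) finSumFinEquiv).trans finSumFinEquiv).trans (finCongr (by omega))

def basis (n : ℕ) : OrthonormalBasis (Fin n ⊕ Fin n ⊕ Fin 2) ℝ (Osc n) :=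
  (EuclideanSpace.basisFun _ ℝ).reindex (indexEquiv n).symm

theorem basis_apply (a : Fin n ⊕ Fin n ⊕ Fin 2) :
    basis n a = EuclideanSpace.single (indexEquiv n a) 1 := by
  simp [basis]

@[simp] theorem basis_inl (i : Fin n) : basis n (.inl i) = oe n i := by
  rw [basis_apply, oe]; rfl

@[simp] theorem basis_inr_inl (i : Fin n) : basis n (.inr (.inl i)) = oE n i := by
  rw [basis_apply, oE]; rfl

@[simp] theorem basis_xi : basis n (.inr (.inr 0)) = oXi n := by
  rw [basis_apply, oXi]; congr 1; ext; simp [indexEquiv]; omega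

@[simp] theorem basis_zeta : basis n (.inr (.inr 1)) = oZeta n := by
  rw [basis_apply, oZeta]; congr 1; ext; simp [indexEquiv]; omega

@[simp] theorem inner_oXi_self : ⟪oXi n, oXi n⟫ = 1 := by
  simpa using (basis n).inner_eq_ite (.inr (.inr 0)) (.inr (.inr 0))

@[simp] theorem inner_oZeta_self : ⟪oZeta n, oZeta n⟫ = 1 := by
  simpa using (basis n).inner_eq_ite (.inr (.inr 1)) (.inr (.inr 1))

@[simp] theorem inner_oXi_oZeta : ⟪oXi n, oZeta n⟫ = 0 := by
  simpa using (basis n).inner_eq_ite (.inr (.inr 0)) (.inr (.inr 1))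

@[simp] theorem inner_oZeta_oXi : ⟪oZeta n, oXi n⟫ = 0 := by
  rw [real_inner_comm, inner_oXi_oZeta]

end Osc

open Osc

section OscillatorAlgebra

variable {n : ℕ} {lam : Fin n → ℝ} {phi El : Osc n →ₗ[ℝ] Osc n}
  {br nab : Osc n →ₗ[ℝ] Osc n →ₗ[ℝ] Osc n}

theorem IsPhi.adjoint_eq (hphi : IsPhi n phi) : LinearMap.adjoint phi = -phi := by
  refine ((LinearMap.eq_adjoint_iff_basis (basis n).toBasis (basis n).toBasis _ _).mpr ?_).symm
  -- Go through `oe`, `oE`, `oXi`, `oZeta` so that `hphi` applies, then back to `basis n` so that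
  -- the inner products are read off from orthonormality.
  simp only [OrthonormalBasis.coe_toBasis, Sum.forall, Fin.forall_fin_two, basis_inl,
    basis_inr_inl, basis_xi, basis_zeta, LinearMap.neg_apply, hphi.he, hphi.hE, hphi.hxi,
    hphi.hzeta]
  simp only [← basis_inl, ← basis_inr_inl, ← basis_xi, ← basis_zeta, inner_neg_left,
    inner_neg_right, OrthonormalBasis.inner_eq_ite]
  simp [eq_comm]

theorem IsPhi.inner_map_swap (hphi : IsPhi n phi) (x y : Osc n) :
    ⟪phi x, y⟫ = -⟪phi y, x⟫ := by
  rw [← LinearMap.adjoint_inner_right phi, hphi.adjoint_eq, LinearMap.neg_apply, inner_neg_right,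
    real_inner_comm]

theorem IsPhi.inner_map_oXi (hphi : IsPhi n phi) (x : Osc n) : ⟪phi x, oXi n⟫ = 0 := by
  rw [hphi.inner_map_swap, hphi.hxi, inner_zero_left, neg_zero]

theorem IsPhi.inner_map_oZeta (hphi : IsPhi n phi) (x : Osc n) : ⟪phi x, oZeta n⟫ = 0 := by
  rw [hphi.inner_map_swap, hphi.hzeta, inner_zero_left, neg_zero]

theorem IsPhi.phi_phi_of_mem_span (hphi : IsPhi n phi) {V : Osc n}
    (hV : V ∈ Submodule.span ℝ (Set.range (oe n) ∪ Set.range (oE n))) : phi (phi V) = -V := by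
  suffices V ∈ LinearMap.ker (phi ∘ₗ phi + LinearMap.id) from eq_neg_of_add_eq_zero_left this
  refine Submodule.span_le.mpr ?_ hV
  rintro _ (⟨i, rfl⟩ | ⟨i, rfl⟩) <;> simp [hphi.he, hphi.hE]

theorem IsElam.isSymmetric (hEl : IsElam n lam El) : El.IsSymmetric := by
  refine (LinearMap.isSymmetric_iff_isSelfAdjoint _).mpr ?_
  refine ((LinearMap.eq_adjoint_iff_basis (basis n).toBasis (basis n).toBasis _ _).mpr ?_).symm
  simp only [OrthonormalBasis.coe_toBasis, Sum.forall, Fin.forall_fin_two, basis_inl,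
    basis_inr_inl, basis_xi, basis_zeta, hEl.he, hEl.hE, hEl.hxi, hEl.hzeta]
  simp only [← basis_inl, ← basis_inr_inl, ← basis_xi, ← basis_zeta, real_inner_smul_left,
    real_inner_smul_right, OrthonormalBasis.inner_eq_ite]
  simp +contextual [eq_comm]

theorem IsElam.comp_phi (hEl : IsElam n lam El) (hphi : IsPhi n phi) :
    El ∘ₗ phi = phi ∘ₗ El := by
  refine (basis n).toBasis.ext fun a => ?_
  revert a
  simp [Sum.forall, Fin.forall_fin_two, hEl.he, hEl.hE, hEl.hxi, hEl.hzeta, hphi.he, hphi.hE,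
    hphi.hxi, hphi.hzeta]

theorem IsElam.apply_phi (hEl : IsElam n lam El) (hphi : IsPhi n phi) (x : Osc n) :
    El (phi x) = phi (El x) :=
  LinearMap.congr_fun (hEl.comp_phi hphi) x

theorem IsPhi.inner_map_El_swap (hphi : IsPhi n phi) (hEl : IsElam n lam El) (x y : Osc n) :
    ⟪phi (El x), y⟫ = -⟪phi (El y), x⟫ := by
  rw [hphi.inner_map_swap, ← hEl.isSymmetric, hEl.apply_phi hphi]

def oscBracket (phi El : Osc n →ₗ[ℝ] Osc n) : Osc n →ₗ[ℝ] Osc n →ₗ[ℝ] Osc n :=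
  LinearMap.mk₂ ℝ
    (fun X Y => ⟪phi X, Y⟫ • oXi n + ⟪X, oZeta n⟫ • phi (El Y) - ⟪Y, oZeta n⟫ • phi (El X))
    (fun _ _ _ => by simp only [map_add, inner_add_left, add_smul]; module)
    (fun _ _ _ => by simp only [map_smul, real_inner_smul_left, smul_smul]; module)
    (fun _ _ _ => by simp only [map_add, inner_add_left, inner_add_right, add_smul]; module)
    (fun _ _ _ => by
      simp only [map_smul, real_inner_smul_left, real_inner_smul_right, smul_smul]; module)

theorem IsOscBracket.eq_oscBracket (hbr : IsOscBracket n lam br) (hphi : IsPhi n phi)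
    (hEl : IsElam n lam El) : br = oscBracket phi El := by
  have hself (X : Osc n) : br X X = 0 := by
    have h := hbr.anti X X
    rw [eq_neg_iff_add_eq_zero, ← two_smul ℝ] at h
    exact (smul_eq_zero.mp h).resolve_left two_ne_zero
  refine LinearMap.ext_basis (basis n).toBasis (basis n).toBasis fun a b => ?_
  revert a b
  simp only [OrthonormalBasis.coe_toBasis, Sum.forall, Fin.forall_fin_two, basis_inl,
    basis_inr_inl, basis_xi, basis_zeta, oscBracket, LinearMap.mk₂_apply,
    hbr.anti (oE n _) (oe n _), hbr.anti (oXi n) (oe n _), hbr.anti (oXi n) (oE n _),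
    hbr.anti (oe n _) (oZeta n), hbr.anti (oE n _) (oZeta n), hbr.anti (oZeta n) (oXi n), hself,
    hbr.ee, hbr.eE, hbr.EE, hbr.exi, hbr.Exi, hbr.zee, hbr.zeE, hbr.xize, hphi.he, hphi.hE,
    hphi.hxi, hphi.hzeta, hEl.he, hEl.hE, hEl.hxi, hEl.hzeta, map_smul, map_zero]
  simp only [← basis_inl, ← basis_inr_inl, ← basis_xi, ← basis_zeta, inner_neg_left,
    OrthonormalBasis.inner_eq_ite]
  simp [eq_comm]

theorem IsLeviCivita.apply_eq (hlc : IsLeviCivita n br nab) (hbr : IsOscBracket n lam br)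
    (hphi : IsPhi n phi) (hEl : IsElam n lam El) (X Y : Osc n) :
    nab X Y = (2⁻¹ * ⟪phi X, Y⟫) • oXi n - (2⁻¹ * ⟪X, oXi n⟫) • phi Y
      - (2⁻¹ * ⟪Y, oXi n⟫) • phi X + ⟪X, oZeta n⟫ • phi (El Y) := by
  refine ext_inner_right ℝ fun Z => ?_
  have h := hlc X Y Z
  simp only [hbr.eq_oscBracket hphi hEl, oscBracket, LinearMap.mk₂_apply, inner_add_left,
    inner_sub_left, real_inner_smul_left] at h
  rw [hphi.inner_map_swap Z X, hphi.inner_map_El_swap hEl Z X, hphi.inner_map_El_swap hEl Y X,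
    hphi.inner_map_El_swap hEl Z Y, real_inner_comm X (oXi n), real_inner_comm Y (oXi n)] at h
  simp only [inner_add_left, inner_sub_left, real_inner_smul_left]
  linear_combination h / 2

theorem IsLeviCivita.apply_xiZeta_left (hlc : IsLeviCivita n br nab)
    (hbr : IsOscBracket n lam br) (hphi : IsPhi n phi) (hEl : IsElam n lam El) (α β : ℝ)
    (Y : Osc n) :
    nab (α • oXi n + β • oZeta n) Y =
      -((1/2 : ℝ) • (α • (LinearMap.id : Osc n →ₗ[ℝ] Osc n) - (2*β) • El) (phi Y)) := by
  rw [hlc.apply_eq hbr hphi hEl]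
  simp only [map_add, map_smul, hphi.hxi, hphi.hzeta, inner_add_left, real_inner_smul_left,
    inner_oXi_self, inner_oZeta_self, inner_oXi_oZeta, inner_oZeta_oXi, inner_zero_left,
    smul_zero, LinearMap.sub_apply, LinearMap.smul_apply, LinearMap.id_apply, hEl.apply_phi hphi]
  module

theorem IsLeviCivita.apply_xiZeta_right (hlc : IsLeviCivita n br nab)
    (hbr : IsOscBracket n lam br) (hphi : IsPhi n phi) (hEl : IsElam n lam El) (α β : ℝ)
    (X : Osc n) :
    nab X (α • oXi n + β • oZeta n) = -((α / 2) • phi X) := by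
  rw [hlc.apply_eq hbr hphi hEl]
  simp only [map_add, map_smul, hphi.hxi, hphi.hzeta, hEl.hxi, hEl.hzeta, inner_add_right,
    real_inner_smul_right, inner_add_left, real_inner_smul_left, hphi.inner_map_oXi,
    hphi.inner_map_oZeta, inner_oXi_self, inner_oZeta_oXi, smul_zero, map_zero]
  module

theorem IsLeviCivita.curvR_phi_phi_xiZeta (hlc : IsLeviCivita n br nab)
    (hbr : IsOscBracket n lam br) (hphi : IsPhi n phi) (hEl : IsElam n lam El) (α β : ℝ)
    (X Y : Osc n) :
    curvR br nab (phi X) (phi Y) (α • oXi n + β • oZeta n) = 0 := by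
  simp only [curvR, hlc.apply_xiZeta_right hbr hphi hEl]
  simp only [map_neg, map_smul, hlc.apply_eq hbr hphi hEl, hbr.eq_oscBracket hphi hEl,
    oscBracket, LinearMap.mk₂_apply, hphi.inner_map_oXi, hphi.inner_map_oZeta, inner_neg_left,
    inner_neg_right, real_inner_smul_left, real_inner_smul_right, map_add, map_sub, hphi.hxi,
    smul_zero, zero_smul, real_inner_comm (phi (phi X))]
  module

end OscillatorAlgebra

theorem computations_xi_zeta_plane_general (n : ℕ) (lam : Fin n → ℝ)
    (br nab : Osc n →ₗ[ℝ] Osc n →ₗ[ℝ] Osc n)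
    (hbr : IsOscBracket n lam br) (hlc : IsLeviCivita n br nab)
    (phi El : Osc n →ₗ[ℝ] Osc n) (hphi : IsPhi n phi) (hEl : IsElam n lam El)
    (V : Osc n)
    (hV : V ∈ Submodule.span ℝ (Set.range (oe n) ∪ Set.range (oE n)))
    (α β : ℝ) (u : Osc n) (hu : u = α • oXi n + β • oZeta n) :
    nomizu nab V u =
      ((1/2) : ℝ) • ((α • (LinearMap.id : Osc n →ₗ[ℝ] Osc n) - (2*β) • El) (phi V)) ∧
    covNomizu nab V u u =
      ((1/4) : ℝ) • ((α • (LinearMap.id : Osc n →ₗ[ℝ] Osc n) - (2*β) • El)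
        ((α • (LinearMap.id : Osc n →ₗ[ℝ] Osc n) - (2*β) • El) V)) ∧
    curvR br nab V (nomizu nab V u) u = 0 := by
  set T := α • (LinearMap.id : Osc n →ₗ[ℝ] Osc n) - (2*β) • El with hT_def
  have hT (Y : Osc n) : phi (T Y) = T (phi Y) := by simp [T, hEl.apply_phi hphi]
  have hA : nomizu nab V u = (1/2 : ℝ) • T (phi V) := by
    rw [nomizu, hu, hlc.apply_xiZeta_left hbr hphi hEl, neg_neg]
  refine ⟨hA, ?_, ?_⟩
  · have huu : nab u u = 0 := by
      have hphi_u : phi u = 0 := by simp [hu, hphi.hxi, hphi.hzeta]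
      rw [hu, hlc.apply_xiZeta_left hbr hphi hEl, ← hu, hphi_u]; simp
    rw [covNomizu, huu, hA, hu, hlc.apply_xiZeta_left hbr hphi hEl, ← hT_def, map_smul, hT,
      hphi.phi_phi_of_mem_span hV]
    simp only [nomizu, map_zero, LinearMap.zero_apply, map_smul, map_neg]
    module
  · have hV' : V = phi (-phi V) := by rw [map_neg, hphi.phi_phi_of_mem_span hV, neg_neg]
    have h := hlc.curvR_phi_phi_xiZeta hbr hphi hEl α β (-phi V) ((1/2 : ℝ) • T V)
    rwa [← hV', map_smul, hT, ← hA, ← hu] at h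

/-- For a unit `V ∈ span(e₁,…,e_{2n})` and `u = α ξ + β ζ`:
`A_V u = ½ (α I − 2β E_λ) φV`, `(∇_u A_V)u = ¼ (α I − 2β E_λ)² V`, and `R(V, A_V u) u = 0`. -/
theorem computations_xi_zeta_plane (n : ℕ) (hn : 1 ≤ n) (lam : Fin n → ℝ)
    (br nab : Osc n →ₗ[ℝ] Osc n →ₗ[ℝ] Osc n)
    (hbr : IsOscBracket n lam br) (hlc : IsLeviCivita n br nab)
    (phi El : Osc n →ₗ[ℝ] Osc n) (hphi : IsPhi n phi) (hEl : IsElam n lam El)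
    (V : Osc n)
    (hV : V ∈ Submodule.span ℝ (Set.range (oe n) ∪ Set.range (oE n)))
    (hVunit : ‖V‖ = 1)
    (α β : ℝ) (u : Osc n) (hu : u = α • oXi n + β • oZeta n) :
    nomizu nab V u =
      ((1/2) : ℝ) • ((α • (LinearMap.id : Osc n →ₗ[ℝ] Osc n) - (2*β) • El) (phi V)) ∧
    covNomizu nab V u u =
      ((1/4) : ℝ) • ((α • (LinearMap.id : Osc n →ₗ[ℝ] Osc n) - (2*β) • El)
        ((α • (LinearMap.id : Osc n →ₗ[ℝ] Osc n) - (2*β) • El) V)) ∧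
    curvR br nab V (nomizu nab V u) u = 0 :=
  computations_xi_zeta_plane_general n lam br nab hbr hlc phi El hphi hEl V hV α β u hu
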